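/- Let V₂ = V V' where V = Θ̃ Π Θ̃(I,I)^{-1} V(I,:) with Π a membership matrix, I a pure-node index tuple with Π(I,:) = I_K, Θ̃ diagonal with strictly positive diagonal, and every row of V nonzero. Then every row of V₂ is nonzero, and there exists Y₂ ∈ ℝ^{n×K} with all entries nonnegative and no zero row such that V_{*,2} = Y₂ V_{*,2}(I,:); explicitly Y₂ = N_{M₂} Π Θ̃(I,I)^{-1} N_{V₂}(I,I)^{-1} where N_{M₂} is diagonal with strictly positive diagonal entries N_{M₂}(i,i) = 1/‖(Π Θ̃(I,I)^{-1} V₂(I,:))(i,:)‖₂. Moreover, if Π(i,:) = Π(j,:) then V_{*,2}(i,:) = V_{*,2}(j,:). -/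

import Mathlib

open Matrix

/-- The Euclidean norm of a row vector. -/
noncomputable def rnorm {m : ℕ} (v : Fin m → ℝ) : ℝ := Real.sqrt (∑ j, v j ^ 2)

/-- Row-wise ℓ₂-normalization of a matrix. -/
noncomputable def rowNormalize {n m : ℕ} (V : Matrix (Fin n) (Fin m) ℝ) :
    Matrix (Fin n) (Fin m) ℝ :=
  Matrix.of fun i j => V i j / rnorm (V i)

/-!
Writing `D = Θ̃(I,I)⁻¹`, the hypothesis `V = Θ̃ Π D V(I,:)` gives `V₂ = Θ̃ M₂` with
`M₂ = Π D V₂(I,:)`. Row normalization ignores the positive row scaling `Θ̃`, so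
`V_{*,2} = N_{M₂} M₂ = N_{M₂} Π D V₂(I,:)`, and substituting `V₂(I,:) = N_{V₂}(I,I)⁻¹ V_{*,2}(I,:)`
yields `V_{*,2} = Y₂ V_{*,2}(I,:)`. Since the rows of `M₂` are functions of the rows of `Π`, so are
those of `V_{*,2}`.
-/

section RowNorm

variable {m : ℕ}

theorem rnorm_eq_norm (v : Fin m → ℝ) : rnorm v = ‖WithLp.toLp 2 v‖ := by
  simp [rnorm, EuclideanSpace.norm_eq]

theorem rnorm_nonneg (v : Fin m → ℝ) : 0 ≤ rnorm v := Real.sqrt_nonneg _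

theorem rnorm_pos {v : Fin m → ℝ} : 0 < rnorm v ↔ v ≠ 0 := by
  rw [rnorm_eq_norm, norm_pos_iff, Ne, Ne, WithLp.toLp_eq_zero]

theorem rnorm_smul (c : ℝ) (v : Fin m → ℝ) : rnorm (c • v) = |c| * rnorm v := by
  rw [rnorm_eq_norm, rnorm_eq_norm, WithLp.toLp_smul, norm_smul, Real.norm_eq_abs]

end RowNorm

section RowNormalize

variable {n m : ℕ}

theorem rowNormalize_eq_diagonal_mul (A : Matrix (Fin n) (Fin m) ℝ) :
    rowNormalize A = diagonal (fun i => (rnorm (A i))⁻¹) * A := by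
  ext i j
  simp [rowNormalize, diagonal_mul, div_eq_inv_mul]

/-- Holds also for zero rows, where `0 * (0 / 0) = 0`. -/
theorem diagonal_rnorm_mul_rowNormalize (A : Matrix (Fin n) (Fin m) ℝ) :
    diagonal (fun i => rnorm (A i)) * rowNormalize A = A := by
  ext i j
  by_cases h : A i = 0
  · simp [diagonal_mul, h, rnorm]
  · simp [rowNormalize, diagonal_mul, mul_div_cancel₀ _ (rnorm_pos.2 h).ne']

theorem diagonal_mul_row (θ : Fin n → ℝ) (A : Matrix (Fin n) (Fin m) ℝ) (i : Fin n) :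
    (diagonal θ * A) i = θ i • A i := by
  ext
  simp [diagonal_mul]

theorem rowNormalize_diagonal_mul {θ : Fin n → ℝ} (hθ : ∀ i, 0 < θ i)
    (A : Matrix (Fin n) (Fin m) ℝ) : rowNormalize (diagonal θ * A) = rowNormalize A := by
  ext i j
  simp only [rowNormalize, of_apply, diagonal_mul_row, rnorm_smul, abs_of_pos (hθ i),
    Pi.smul_apply, smul_eq_mul, mul_div_mul_left _ _ (hθ i).ne']

theorem rowNormalize_mul {k : ℕ} (C : Matrix (Fin n) (Fin k) ℝ) (W : Matrix (Fin k) (Fin m) ℝ) :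
    rowNormalize (C * W) = diagonal (fun i => (rnorm ((C * W) i))⁻¹) * C *
      diagonal (fun l => rnorm (W l)) * rowNormalize W := by
  calc rowNormalize (C * W)
      = diagonal (fun i => (rnorm ((C * W) i))⁻¹) * (C * W) := rowNormalize_eq_diagonal_mul _
    _ = diagonal (fun i => (rnorm ((C * W) i))⁻¹) * (C *
          (diagonal (fun l => rnorm (W l)) * rowNormalize W)) := by
        rw [diagonal_rnorm_mul_rowNormalize]
    _ = _ := by simp only [Matrix.mul_assoc]

theorem rowNormalize_row_congr {A : Matrix (Fin n) (Fin m) ℝ} {i j : Fin n} (h : A i = A j) :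
    rowNormalize A i = rowNormalize A j := by
  ext l
  simp [rowNormalize, h]

end RowNormalize

section Gram

variable {n m p : ℕ}

theorem mul_transpose_self_row_ne_zero {V : Matrix (Fin n) (Fin m) ℝ} {i : Fin n}
    (h : V i ≠ 0) : (V * Vᵀ) i ≠ 0 := fun hi =>
  h (dotProduct_self_eq_zero.1 (by simpa [mul_apply, dotProduct] using congrFun hi i))

theorem submatrix_mul_rows {k : ℕ} (V : Matrix (Fin n) (Fin m) ℝ) (W : Matrix (Fin m) (Fin p) ℝ)
    (I : Fin k → Fin n) : (V * W).submatrix I id = V.submatrix I id * W := by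
  simpa using submatrix_mul V W I id id Function.bijective_id

theorem mul_eq_mul_submatrix_of_eq {k : ℕ} {V : Matrix (Fin n) (Fin m) ℝ}
    {A : Matrix (Fin n) (Fin k) ℝ} {I : Fin k → Fin n} (hV : V = A * V.submatrix I id)
    (W : Matrix (Fin m) (Fin p) ℝ) : V * W = A * (V * W).submatrix I id := by
  rw [submatrix_mul_rows, ← Matrix.mul_assoc, ← hV]

end Gram

section DiagonalScaling

variable {n K : ℕ}

theorem diagonal_mul_mul_diagonal_apply (a : Fin n → ℝ) (P : Matrix (Fin n) (Fin K) ℝ)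
    (b : Fin K → ℝ) (i : Fin n) (k : Fin K) :
    (diagonal a * P * diagonal b) i k = a i * P i k * b k := by
  simp [diagonal_mul, mul_diagonal]

theorem diagonal_mul_mul_diagonal_nonneg {a : Fin n → ℝ} {P : Matrix (Fin n) (Fin K) ℝ}
    {b : Fin K → ℝ} (ha : ∀ i, 0 ≤ a i) (hP : ∀ i k, 0 ≤ P i k) (hb : ∀ k, 0 ≤ b k)
    (i : Fin n) (k : Fin K) : 0 ≤ (diagonal a * P * diagonal b) i k := by
  rw [diagonal_mul_mul_diagonal_apply]
  exact mul_nonneg (mul_nonneg (ha i) (hP i k)) (hb k)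

theorem diagonal_mul_mul_diagonal_row_ne_zero {a : Fin n → ℝ} {P : Matrix (Fin n) (Fin K) ℝ}
    {b : Fin K → ℝ} {i : Fin n} (ha : a i ≠ 0) (hP : P i ≠ 0) (hb : ∀ k, b k ≠ 0) :
    (diagonal a * P * diagonal b) i ≠ 0 := by
  obtain ⟨k, hk⟩ := Function.ne_iff.1 hP
  refine Function.ne_iff.2 ⟨k, ?_⟩
  rw [Pi.zero_apply, diagonal_mul_mul_diagonal_apply]
  exact mul_ne_zero (mul_ne_zero ha hk) (hb k)

end DiagonalScaling

theorem ideal_cone_structure_V2_general {n K : ℕ}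
    (Pim : Matrix (Fin n) (Fin K) ℝ)
    (hnonneg : ∀ i k, 0 ≤ Pim i k)
    (hrowsum : ∀ i, ∑ k, Pim i k = 1)
    (I : Fin K → Fin n)
    (θ : Fin n → ℝ) (hθ : ∀ i, 0 < θ i)
    (V : Matrix (Fin n) (Fin K) ℝ)
    (hVdef : V = Matrix.diagonal θ * Pim *
      (Matrix.diagonal (fun k => (θ (I k))⁻¹) * V.submatrix I id))
    (hrows : ∀ i, V i ≠ 0) :
    let V2 := V * Vᵀ
    (∀ i, V2 i ≠ 0) ∧
    (let M2 := Pim * Matrix.diagonal (fun k => (θ (I k))⁻¹) * V2.submatrix I id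
     let Y2 := Matrix.diagonal (fun i => (rnorm (M2 i))⁻¹) * Pim *
       Matrix.diagonal (fun k => (θ (I k))⁻¹) *
       Matrix.diagonal (fun k => rnorm (V2 (I k)))
     (∀ i, 0 < (rnorm (M2 i))⁻¹) ∧
     (∀ i k, 0 ≤ Y2 i k) ∧ (∀ i, Y2 i ≠ 0) ∧
       rowNormalize V2 = Y2 * (rowNormalize V2).submatrix I id) ∧
    (∀ i j, Pim i = Pim j → rowNormalize V2 i = rowNormalize V2 j) := by
  intro V2
  set D := diagonal fun k => (θ (I k))⁻¹
  set M2 := Pim * D * V2.submatrix I id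
  have hV2 : V2 = diagonal θ * M2 := by
    simp only [M2, ← Matrix.mul_assoc]
    exact mul_eq_mul_submatrix_of_eq (by rwa [Matrix.mul_assoc (diagonal θ * Pim)]) Vᵀ
  have hV2rows : ∀ i, V2 i ≠ 0 := fun i => mul_transpose_self_row_ne_zero (hrows i)
  have hM2rows : ∀ i, M2 i ≠ 0 := fun i hi =>
    hV2rows i (by rw [hV2, diagonal_mul_row, hi, smul_zero])
  have hRN : rowNormalize V2 = rowNormalize M2 := by rw [hV2, rowNormalize_diagonal_mul hθ]
  have hY2 : diagonal (fun i => (rnorm (M2 i))⁻¹) * Pim * D *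
      diagonal (fun k => rnorm (V2 (I k))) = diagonal (fun i => (rnorm (M2 i))⁻¹) * Pim *
        diagonal (fun k => (θ (I k))⁻¹ * rnorm (V2 (I k))) := by
    rw [Matrix.mul_assoc _ D, diagonal_mul_diagonal]
  refine ⟨hV2rows, ⟨fun i => inv_pos.2 (rnorm_pos.2 (hM2rows i)), ?_, ?_, ?_⟩, ?_⟩
  · rw [hY2]
    exact diagonal_mul_mul_diagonal_nonneg (fun i => inv_nonneg.2 (rnorm_nonneg _)) hnonneg
      fun k => mul_nonneg (inv_nonneg.2 (hθ _).le) (rnorm_nonneg _)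
  · intro i
    rw [hY2]
    refine diagonal_mul_mul_diagonal_row_ne_zero (inv_ne_zero (rnorm_pos.2 (hM2rows i)).ne')
      (fun h => by simpa [h] using hrowsum i) fun k => ?_
    exact mul_ne_zero (inv_ne_zero (hθ _).ne') (rnorm_pos.2 (hV2rows _)).ne'
  · conv_lhs => rw [hRN, rowNormalize_mul, ← Matrix.mul_assoc _ Pim D]
    rfl
  · intro i j hij
    rw [hRN]
    exact rowNormalize_row_congr (by simp only [M2, Matrix.mul_assoc, mul_apply_eq_vecMul, hij])

/-- **Ideal Cone for `V₂ = V V'`.** If `V = Θ̃ Π Θ̃(I,I)⁻¹ V(I,:)` with every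
row of `V` nonzero, then every row of `V₂ = V V'` is nonzero, the explicit nonnegative matrix
`Y₂ = N_{M₂} Π Θ̃(I,I)⁻¹ N_{V₂}(I,I)⁻¹` has no zero row and satisfies
`V₂₊ = Y₂ V₂₊(I,:)`; moreover `Π(i,:) = Π(j,:)` implies `V₂₊(i,:) = V₂₊(j,:)`. -/
theorem ideal_cone_structure_V2 {n K : ℕ} (hK : 1 ≤ K) (hKn : K ≤ n)
    (Pim : Matrix (Fin n) (Fin K) ℝ)
    (hnonneg : ∀ i k, 0 ≤ Pim i k)
    (hrowsum : ∀ i, ∑ k, Pim i k = 1)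
    (I : Fin K → Fin n)
    (hpure : ∀ k l, Pim (I k) l = if l = k then (1 : ℝ) else 0)
    (θ : Fin n → ℝ) (hθ : ∀ i, 0 < θ i)
    (V : Matrix (Fin n) (Fin K) ℝ)
    (hVdef : V = Matrix.diagonal θ * Pim *
      (Matrix.diagonal (fun k => (θ (I k))⁻¹) * V.submatrix I id))
    (hrows : ∀ i, V i ≠ 0) :
    let V2 := V * Vᵀ
    (∀ i, V2 i ≠ 0) ∧
    (let M2 := Pim * Matrix.diagonal (fun k => (θ (I k))⁻¹) * V2.submatrix I id
     let Y2 := Matrix.diagonal (fun i => (rnorm (M2 i))⁻¹) * Pim *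
       Matrix.diagonal (fun k => (θ (I k))⁻¹) *
       Matrix.diagonal (fun k => rnorm (V2 (I k)))
     (∀ i, 0 < (rnorm (M2 i))⁻¹) ∧
     (∀ i k, 0 ≤ Y2 i k) ∧ (∀ i, Y2 i ≠ 0) ∧
       rowNormalize V2 = Y2 * (rowNormalize V2).submatrix I id) ∧
    (∀ i j, Pim i = Pim j → rowNormalize V2 i = rowNormalize V2 j) :=
  ideal_cone_structure_V2_general Pim hnonneg hrowsum I θ hθ V hVdef hrows
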